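/- Rademacher complexity of maxima: Let F be a family of real-valued functions on X and G = { x ↦ max(f_1(x), ..., f_k(x)) : f_1, ..., f_k ∈ F }. Then for any finite sample S of size m, the empirical Rademacher complexity satisfies R̂_S(G) ≤ k · R̂_S(F). -/

import Mathlib

/-- Empirical Rademacher complexity of a family `H` of real-valued functions on a sample
`S = (z_1, …, z_m)`: `E_σ[sup_{h∈H} (1/m) Σ_t σ_t h(z_t)]`, the expectation taken over
independent uniform random signs `σ ∈ {−1,+1}^m` (encoded by `Fin m → Bool`). -/
noncomputable def rademacher {X : Type*} (m : ℕ) (S : Fin m → X) (H : Set (X → ℝ)) : ℝ :=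
  (∑ σ : Fin m → Bool, sSup {v : ℝ | ∃ h ∈ H,
      v = (m : ℝ)⁻¹ * ∑ t, (if σ t then (1 : ℝ) else -1) * h (S t)}) / 2 ^ m

/-!
Only the sample vectors `(h (z_1), …, h (z_m))` matter, so let `A, B ⊆ ℝ^m` be bounded sets of
them. Since `2 (a ⊔ b) = a + b + |b - a|`, the set `A ⊻ B` of pointwise maxima lies in
`½ (A + B + |B - A|)`. The Rademacher complexity is monotone, subadditive, invariant under
`A ↦ -A`, and does not increase when a `1`-Lipschitz map such as `|·|` is applied coordinatewise
(contraction principle: pair each sign vector with the one flipped at a single coordinate).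
Hence `R(A ⊻ B) ≤ ½ (R A + R B + R B + R A) = R A + R B`, and induction on `k` gives the factor `k`.
-/

open Set Function Bornology
open scoped Matrix Pointwise SetFamily

theorem Fintype.sum_le_sum_of_add_comp_perm_le {α : Type*} [Fintype α] (e : Equiv.Perm α)
    {f g : α → ℝ} (h : ∀ a, f a + f (e a) ≤ g a + g (e a)) : ∑ a, f a ≤ ∑ a, g a := by
  have hsum := Finset.sum_le_sum fun a (_ : a ∈ Finset.univ) => h a
  rw [Finset.sum_add_distrib, Finset.sum_add_distrib, Equiv.sum_comp e f,
    Equiv.sum_comp e g] at hsum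
  linarith

theorem sSup_add_sSup_sub_le_of_abs_sub_le {α : Type*} {B : Set α} (hB : B.Nonempty)
    {u x y : α → ℝ} (hxy : ∀ i ∈ B, ∀ j ∈ B, |y i - y j| ≤ |x i - x j|)
    (h_add : BddAbove ((fun i => u i + x i) '' B)) (h_sub : BddAbove ((fun i => u i - x i) '' B)) :
    sSup ((fun i => u i + y i) '' B) + sSup ((fun i => u i - y i) '' B) ≤
      sSup ((fun i => u i + x i) '' B) + sSup ((fun i => u i - x i) '' B) := by
  set R := sSup ((fun i => u i + x i) '' B) + sSup ((fun i => u i - x i) '' B)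
  have le_R : ∀ i ∈ B, ∀ j ∈ B, (u i + x i) + (u j - x j) ≤ R := fun i hi j hj =>
    add_le_add (le_csSup h_add (mem_image_of_mem _ hi)) (le_csSup h_sub (mem_image_of_mem _ hj))
  -- the pair `(i, j)` is dominated by `(i, j)` or by `(j, i)`, according to the sign of `x i - x j`
  have hpair : ∀ i ∈ B, ∀ j ∈ B, (u i + y i) + (u j - y j) ≤ R := by
    intro i hi j hj
    rcases le_abs.1 ((le_abs_self _).trans (hxy i hi j hj)) with h | h
    · linarith [le_R i hi j hj]
    · linarith [le_R j hj i hi]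
  have hsub : ∀ i ∈ B, sSup ((fun j => u j - y j) '' B) ≤ R - (u i + y i) := fun i hi =>
    csSup_le (hB.image _) (forall_mem_image.2 fun j hj => by linarith [hpair i hi j hj])
  have hadd : sSup ((fun i => u i + y i) '' B) ≤ R - sSup ((fun j => u j - y j) '' B) :=
    csSup_le (hB.image _) (forall_mem_image.2 fun i hi => by linarith [hsub i hi])
  linarith

theorem dotProduct_update {ι : Type*} [Fintype ι] [DecidableEq ι] (v b : ι → ℝ) (t₀ : ι)
    (c : ℝ) : v ⬝ᵥ update b t₀ c = ∑ t ∈ Finset.univ.erase t₀, v t * b t + v t₀ * c := by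
  rw [dotProduct, ← Finset.add_sum_erase _ _ (Finset.mem_univ t₀), add_comm, update_self]
  congr 1
  exact Finset.sum_congr rfl fun t ht => by rw [update_of_ne (Finset.ne_of_mem_erase ht)]

theorem isBounded_image_piecewise_comp {ι : Type*} {φ : ℝ → ℝ} {K : NNReal}
    (hφ : LipschitzWith K φ) (T : Finset ι) [DecidablePred (· ∈ T)] {A : Set (ι → ℝ)}
    (hA : IsBounded A) : IsBounded ((fun a => T.piecewise (φ ∘ a) a) '' A) := by
  rw [← forall_isBounded_image_eval_iff] at hA ⊢
  intro t
  rw [image_image]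
  by_cases ht : t ∈ T
  · simpa [ht, image_image] using hφ.isBounded_image (hA t)
  · simpa [ht] using hA t

def familySupSet {α κ : Type*} [SemilatticeSup α] (A : Set α) (s : Finset κ) (hs : s.Nonempty) :
    Set α :=
  {w | ∃ a : κ → α, (∀ i, a i ∈ A) ∧ w = s.sup' hs a}

section Lattice

variable {α κ : Type*} {A : Set α} {s : Finset κ}

theorem familySupSet_nonempty [SemilatticeSup α] (hA : A.Nonempty) (hs : s.Nonempty) :
    (familySupSet A s hs).Nonempty :=
  let ⟨a, ha⟩ := hA
  ⟨_, fun _ => a, fun _ => ha, rfl⟩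

theorem familySupSet_singleton_subset [SemilatticeSup α] (i : κ) :
    familySupSet A {i} (Finset.singleton_nonempty i) ⊆ A := by
  rintro _ ⟨a, ha, rfl⟩
  simpa using ha i

theorem familySupSet_cons_subset [SemilatticeSup α] {i : κ} (hi : i ∉ s) (hs : s.Nonempty) :
    familySupSet A (s.cons i hi) (Finset.cons_nonempty hi) ⊆ A ⊻ familySupSet A s hs := by
  rintro _ ⟨a, ha, rfl⟩
  rw [Finset.sup'_cons hs]
  exact mem_image2_of_mem (ha i) ⟨a, ha, rfl⟩

variable [Lattice α] [Bornology α] [IsOrderBornology α]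

theorem Bornology.IsBounded.sups {B : Set α} (hA : IsBounded A) (hB : IsBounded B) :
    IsBounded (A ⊻ B) := by
  obtain ⟨⟨l, hl⟩, ⟨u, hu⟩⟩ := isBounded_iff_bddBelow_bddAbove.1 hA
  obtain ⟨u', hu'⟩ := hB.bddAbove
  refine isBounded_iff_bddBelow_bddAbove.2 ⟨⟨l, ?_⟩, ⟨u ⊔ u', ?_⟩⟩ <;>
    rintro _ ⟨a, ha, b, hb, rfl⟩
  · exact (hl ha).trans le_sup_left
  · exact sup_le_sup (hu ha) (hu' hb)

theorem isBounded_familySupSet (hA : IsBounded A) (hs : s.Nonempty) :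
    IsBounded (familySupSet A s hs) := by
  obtain ⟨⟨l, hl⟩, ⟨u, hu⟩⟩ := isBounded_iff_bddBelow_bddAbove.1 hA
  obtain ⟨i, hi⟩ := hs
  refine isBounded_iff_bddBelow_bddAbove.2 ⟨⟨l, ?_⟩, ⟨u, ?_⟩⟩ <;> rintro _ ⟨a, ha, rfl⟩
  · exact (hl (ha i)).trans (Finset.le_sup' a hi)
  · exact Finset.sup'_le _ _ fun j _ => hu (ha j)

end Lattice

section RademacherSum

variable {ι : Type*}

def rademacherSign (σ : ι → Bool) : ι → ℝ := fun t => if σ t then 1 else -1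

theorem abs_rademacherSign (σ : ι → Bool) (t : ι) : |rademacherSign σ t| = 1 := by
  cases h : σ t <;> simp [rademacherSign, h]

theorem rademacherSign_comp_not (σ : ι → Bool) :
    rademacherSign ((! ·) ∘ σ) = -rademacherSign σ := by
  ext t
  cases h : σ t <;> simp [rademacherSign, h]

variable [Fintype ι]

theorem bddAbove_rademacherSign_dotProduct_image {A : Set (ι → ℝ)} (hA : IsBounded A)
    (σ : ι → Bool) : BddAbove ((rademacherSign σ ⬝ᵥ ·) '' A) :=
  (hA.isCompact_closure.bddAbove_image
    (by fun_prop : Continuous (rademacherSign σ ⬝ᵥ ·)).continuousOn).mono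
      (image_mono subset_closure)

variable [DecidableEq ι] {φ : ℝ → ℝ}

noncomputable def rademacherSum (A : Set (ι → ℝ)) : ℝ :=
  ∑ σ : ι → Bool, sSup ((rademacherSign σ ⬝ᵥ ·) '' A)

theorem rademacherSum_mono {A B : Set (ι → ℝ)} (hA : A.Nonempty) (hB : IsBounded B)
    (hAB : A ⊆ B) : rademacherSum A ≤ rademacherSum B :=
  Finset.sum_le_sum fun σ _ => csSup_le_csSup (bddAbove_rademacherSign_dotProduct_image hB σ)
    (hA.image _) (image_mono hAB)

theorem rademacherSum_add_le {A B : Set (ι → ℝ)} (hA : IsBounded A) (hB : IsBounded B)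
    (hA' : A.Nonempty) (hB' : B.Nonempty) :
    rademacherSum (A + B) ≤ rademacherSum A + rademacherSum B := by
  rw [rademacherSum, rademacherSum, rademacherSum, ← Finset.sum_add_distrib]
  refine Finset.sum_le_sum fun σ _ => csSup_le ((hA'.add hB').image _) ?_
  rintro _ ⟨_, ⟨a, ha, b, hb, rfl⟩, rfl⟩
  simp only [dotProduct_add]
  exact add_le_add
    (le_csSup (bddAbove_rademacherSign_dotProduct_image hA σ) (mem_image_of_mem _ ha))
    (le_csSup (bddAbove_rademacherSign_dotProduct_image hB σ) (mem_image_of_mem _ hb))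

theorem rademacherSum_neg (A : Set (ι → ℝ)) : rademacherSum (-A) = rademacherSum A := by
  have hnot : Involutive fun σ : ι → Bool => (! ·) ∘ σ := fun σ => by ext; simp
  have himage : ∀ σ : ι → Bool, (rademacherSign σ ⬝ᵥ ·) '' (-A) =
      (rademacherSign ((! ·) ∘ σ) ⬝ᵥ ·) '' A := fun σ =>
    image_neg_of_apply_neg_eq fun a _ => by
      rw [dotProduct_neg, ← neg_dotProduct, rademacherSign_comp_not]
  simp only [rademacherSum, himage]
  exact Equiv.sum_comp (hnot.toPerm _) fun σ => sSup ((rademacherSign σ ⬝ᵥ ·) '' A)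

theorem rademacherSum_smul {c : ℝ} (hc : 0 ≤ c) (A : Set (ι → ℝ)) :
    rademacherSum (c • A) = c * rademacherSum A := by
  rw [rademacherSum, rademacherSum, Finset.mul_sum]
  refine Finset.sum_congr rfl fun σ _ => ?_
  rw [← smul_eq_mul, ← Real.sSup_smul_of_nonneg hc, ← Set.image_smul, ← Set.image_smul,
    image_image, image_image]
  simp_rw [dotProduct_smul]

theorem rademacherSum_image_update_comp_le (hφ : LipschitzWith 1 φ) (t₀ : ι)
    {B : Set (ι → ℝ)} (hB : IsBounded B) (hne : B.Nonempty) :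
    rademacherSum ((fun b => update b t₀ (φ (b t₀))) '' B) ≤ rademacherSum B := by
  have hflip : Involutive fun σ : ι → Bool => update σ t₀ (!σ t₀) := fun σ => by simp
  refine Fintype.sum_le_sum_of_add_comp_perm_le (hflip.toPerm _) fun σ => ?_
  simp only [Involutive.coe_toPerm]
  set σ' := update σ t₀ (!σ t₀)
  set s := rademacherSign σ t₀
  -- `σ` and `σ'` agree off `t₀`, so the other coordinates contribute `u b` to all four sums below
  set u : (ι → ℝ) → ℝ := fun b => ∑ t ∈ Finset.univ.erase t₀, rademacherSign σ t * b t
  have hσ' : rademacherSign σ' t₀ = -s := by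
    cases h : σ t₀ <;> simp [σ', s, rademacherSign, h]
  have himage : ∀ τ : ι → Bool, (∀ t ≠ t₀, τ t = σ t) →
      (rademacherSign τ ⬝ᵥ ·) '' B = (fun b => u b + rademacherSign τ t₀ * b t₀) '' B ∧
      (rademacherSign τ ⬝ᵥ ·) '' ((fun b => update b t₀ (φ (b t₀))) '' B) =
        (fun b => u b + rademacherSign τ t₀ * φ (b t₀)) '' B := by
    intro τ hτ
    have hsplit : ∀ b c, rademacherSign τ ⬝ᵥ update b t₀ c = u b + rademacherSign τ t₀ * c :=
      fun b c => by
        rw [dotProduct_update]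
        congr 1
        refine Finset.sum_congr rfl fun t ht => ?_
        rw [rademacherSign, rademacherSign, hτ t (Finset.ne_of_mem_erase ht)]
    exact ⟨image_congr fun b _ => by rw [← hsplit, update_eq_self],
      by rw [image_image]; exact image_congr fun b _ => hsplit b _⟩
  obtain ⟨hσB, hσφB⟩ := himage σ fun _ _ => rfl
  obtain ⟨hσ'B, hσ'φB⟩ := himage σ' fun t ht => update_of_ne ht _ _
  have h_add := bddAbove_rademacherSign_dotProduct_image hB σ
  have h_sub := bddAbove_rademacherSign_dotProduct_image hB σ'
  simp only [hσB, hσφB, hσ'B, hσ'φB, hσ', neg_mul, ← sub_eq_add_neg] at h_add h_sub ⊢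
  refine sSup_add_sSup_sub_le_of_abs_sub_le hne (fun i _ j _ => ?_) h_add h_sub
  rw [← mul_sub, ← mul_sub, abs_mul, abs_mul, abs_rademacherSign, one_mul, one_mul,
    ← Real.dist_eq, ← Real.dist_eq]
  simpa using hφ.dist_le_mul (i t₀) (j t₀)

theorem rademacherSum_image_piecewise_comp_le (hφ : LipschitzWith 1 φ) (T : Finset ι)
    {A : Set (ι → ℝ)} (hA : IsBounded A) (hne : A.Nonempty) :
    rademacherSum ((fun a => T.piecewise (φ ∘ a) a) '' A) ≤ rademacherSum A := by
  induction T using Finset.induction_on with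
  | empty => simp
  | insert t₀ T ht₀ ih =>
    calc rademacherSum ((fun a => (insert t₀ T).piecewise (φ ∘ a) a) '' A)
        = rademacherSum ((fun b => update b t₀ (φ (b t₀))) ''
            ((fun a => T.piecewise (φ ∘ a) a) '' A)) := by
          rw [image_image]
          congr! 3 with a
          rw [Finset.piecewise_insert, Finset.piecewise_eq_of_notMem _ _ _ ht₀, comp_apply]
      _ ≤ rademacherSum ((fun a => T.piecewise (φ ∘ a) a) '' A) :=
          rademacherSum_image_update_comp_le hφ t₀ (isBounded_image_piecewise_comp hφ T hA)
            (hne.image _)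
      _ ≤ rademacherSum A := ih

theorem rademacherSum_image_comp_le (hφ : LipschitzWith 1 φ) {A : Set (ι → ℝ)}
    (hA : IsBounded A) (hne : A.Nonempty) :
    rademacherSum ((φ ∘ ·) '' A) ≤ rademacherSum A := by
  simpa using rademacherSum_image_piecewise_comp_le hφ Finset.univ hA hne

theorem rademacherSum_sups_le {A B : Set (ι → ℝ)} (hA : IsBounded A) (hB : IsBounded B)
    (hA' : A.Nonempty) (hB' : B.Nonempty) :
    rademacherSum (A ⊻ B) ≤ rademacherSum A + rademacherSum B := by
  have habs : LipschitzWith 1 (abs : ℝ → ℝ) := lipschitzWith_one_norm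
  have hD : IsBounded (B + -A) := hB.add hA.neg
  have hD' : IsBounded ((abs ∘ ·) '' (B + -A)) := by
    simpa using isBounded_image_piecewise_comp habs Finset.univ hD
  have hsub : A ⊻ B ⊆ (2⁻¹ : ℝ) • (A + B + (abs ∘ ·) '' (B + -A)) := by
    rintro _ ⟨a, ha, b, hb, rfl⟩
    change a ⊔ b ∈ _
    rw [sup_eq_half_smul_add_add_abs_sub' ℝ, sub_eq_add_neg]
    exact smul_mem_smul_set (add_mem_add (add_mem_add ha hb)
      (mem_image_of_mem _ (add_mem_add hb (neg_mem_neg.2 ha))))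
  calc rademacherSum (A ⊻ B)
      ≤ rademacherSum ((2⁻¹ : ℝ) • (A + B + (abs ∘ ·) '' (B + -A))) :=
        rademacherSum_mono (hA'.sups hB') (((hA.add hB).add hD').smul₀ _) hsub
    _ = 2⁻¹ * rademacherSum (A + B + (abs ∘ ·) '' (B + -A)) :=
        rademacherSum_smul (by norm_num) _
    _ ≤ 2⁻¹ * (rademacherSum A + rademacherSum B + rademacherSum (B + -A)) := by
        gcongr
        linarith [rademacherSum_add_le (hA.add hB) hD' (hA'.add hB') ((hB'.add hA'.neg).image _),
          rademacherSum_add_le hA hB hA' hB',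
          rademacherSum_image_comp_le habs hD (hB'.add hA'.neg)]
    _ ≤ 2⁻¹ * (rademacherSum A + rademacherSum B + (rademacherSum B + rademacherSum A)) := by
        gcongr
        rw [← rademacherSum_neg A]
        exact rademacherSum_add_le hB hA.neg hB' hA'.neg
    _ = rademacherSum A + rademacherSum B := by ring

theorem rademacherSum_familySupSet_le {κ : Type*} {A : Set (ι → ℝ)} (hA : IsBounded A)
    (hne : A.Nonempty) (s : Finset κ) (hs : s.Nonempty) :
    rademacherSum (familySupSet A s hs) ≤ s.card * rademacherSum A := by
  induction hs using Finset.Nonempty.cons_induction with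
  | singleton i =>
    simpa using rademacherSum_mono (familySupSet_nonempty hne _) hA
      (familySupSet_singleton_subset i)
  | cons i s hi hs ih =>
    calc rademacherSum (familySupSet A (s.cons i hi) _)
        ≤ rademacherSum (A ⊻ familySupSet A s hs) :=
          rademacherSum_mono (familySupSet_nonempty hne _)
            (hA.sups (isBounded_familySupSet hA hs)) (familySupSet_cons_subset hi hs)
      _ ≤ rademacherSum A + rademacherSum (familySupSet A s hs) :=
          rademacherSum_sups_le hA (isBounded_familySupSet hA hs) hne
            (familySupSet_nonempty hne hs)
      _ ≤ (s.cons i hi).card * rademacherSum A := by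
          rw [Finset.card_cons, Nat.cast_succ]
          linarith

end RademacherSum

theorem rademacher_eq_rademacherSum {X : Type*} (m : ℕ) (S : Fin m → X) (H : Set (X → ℝ)) :
    rademacher m S H = (m : ℝ)⁻¹ * rademacherSum ((· ∘ S) '' H) / 2 ^ m := by
  rw [rademacher, rademacherSum, Finset.mul_sum]
  congr 1
  refine Finset.sum_congr rfl fun σ _ => ?_
  rw [← smul_eq_mul, ← Real.sSup_smul_of_nonneg (by positivity)]
  congr 1
  ext v
  constructor
  · rintro ⟨h, hH, rfl⟩
    exact smul_mem_smul_set (mem_image_of_mem _ (mem_image_of_mem _ hH))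
  · rintro ⟨_, ⟨_, ⟨h, hH, rfl⟩, rfl⟩, rfl⟩
    exact ⟨h, hH, rfl⟩

theorem rademacher_max_le_general {X : Type*} (m k : ℕ) [NeZero k]
    (S : Fin m → X) (F : Set (X → ℝ)) (hF : F.Nonempty)
    (C : ℝ) (hC : ∀ h ∈ F, ∀ x : X, |h x| ≤ C) :
    rademacher m S {g : X → ℝ | ∃ fs : Fin k → X → ℝ, (∀ i, fs i ∈ F) ∧
        g = fun x => Finset.univ.sup' Finset.univ_nonempty fun i => fs i x}
      ≤ (k : ℝ) * rademacher m S F := by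
  set G := {g : X → ℝ | ∃ fs : Fin k → X → ℝ, (∀ i, fs i ∈ F) ∧
    g = fun x => Finset.univ.sup' Finset.univ_nonempty fun i => fs i x}
  set A := (· ∘ S) '' F
  have hA : IsBounded A := by
    refine isBounded_iff_bddBelow_bddAbove.2 ⟨⟨fun _ => -C, ?_⟩, ⟨fun _ => C, ?_⟩⟩ <;>
      rintro _ ⟨f, hf, rfl⟩ t
    exacts [(abs_le.1 (hC f hf (S t))).1, (abs_le.1 (hC f hf (S t))).2]
  have hGA : (· ∘ S) '' G ⊆ familySupSet A (Finset.univ : Finset (Fin k)) Finset.univ_nonempty := by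
    rintro _ ⟨_, ⟨fs, hfs, rfl⟩, rfl⟩
    exact ⟨(· ∘ S) ∘ fs, fun i => mem_image_of_mem _ (hfs i), by ext; simp [Finset.sup'_apply]⟩
  obtain ⟨f, hf⟩ := hF
  have hG : ((· ∘ S) '' G).Nonempty := ⟨_, mem_image_of_mem _ ⟨fun _ => f, fun _ => hf, rfl⟩⟩
  have hsum : rademacherSum ((· ∘ S) '' G) ≤ k * rademacherSum A := by
    simpa using (rademacherSum_mono hG (isBounded_familySupSet hA _) hGA).trans
      (rademacherSum_familySupSet_le hA ⟨_, mem_image_of_mem _ hf⟩ _ _)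
  rw [rademacher_eq_rademacherSum, rademacher_eq_rademacherSum]
  calc _ ≤ (m : ℝ)⁻¹ * (k * rademacherSum A) / 2 ^ m := by gcongr
    _ = _ := by ring

/-- Rademacher complexity of maxima: for
`G = { x ↦ max(f_1(x), …, f_k(x)) : f_1, …, f_k ∈ F }`, `R̂_S(G) ≤ k · R̂_S(F)`. -/
theorem rademacher_max_le {X : Type*} (m k : ℕ) [NeZero m] [NeZero k]
    (S : Fin m → X) (F : Set (X → ℝ)) (hF : F.Nonempty)
    (C : ℝ) (hC : ∀ h ∈ F, ∀ x : X, |h x| ≤ C) :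
    rademacher m S {g : X → ℝ | ∃ fs : Fin k → X → ℝ, (∀ i, fs i ∈ F) ∧
        g = fun x => Finset.univ.sup' Finset.univ_nonempty fun i => fs i x}
      ≤ (k : ℝ) * rademacher m S F :=
  rademacher_max_le_general m k S F hF C hC
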